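/- arXiv:0907.0568 — 6 statements merged into one kernel-verified Lean document; each statement's English description precedes it below -/
import Mathlib

section
/- For k > 2, the element (ab)^k does not belong to the normal subgroup of the free group F(a,b) generated by a^k and b^k. -/
def myAFun (k : ℕ) : ℤ → ℤ :=
  fun x => if x = (k:ℤ)-1 then 0 else if 0 ≤ x ∧ x < (k:ℤ)-1 then x+1 else x

def myAInv (k : ℕ) : ℤ → ℤ :=
  fun x => if x = 0 then (k:ℤ)-1 else if 0 < x ∧ x ≤ (k:ℤ)-1 then x-1 else x

lemma myA_left_inv (k : ℕ) (hk : 0 < k) (x : ℤ) : myAInv k (myAFun k x) = x := by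
  simp only [myAFun, myAInv]; split_ifs <;> omega

lemma myA_right_inv (k : ℕ) (hk : 0 < k) (x : ℤ) : myAFun k (myAInv k x) = x := by
  simp only [myAFun, myAInv]; split_ifs <;> omega

/-- A `k`-cycle on `{0, …, k-1} ⊆ ℤ`. -/
def myAPerm (k : ℕ) (hk : 0 < k) : Equiv.Perm ℤ :=
  ⟨myAFun k, myAInv k, myA_left_inv k hk, myA_right_inv k hk⟩

lemma myAPerm_apply (k : ℕ) (hk : 0 < k) (x : ℤ) :
    myAPerm k hk x = if x = (k:ℤ)-1 then 0 else if 0 ≤ x ∧ x < (k:ℤ)-1 then x+1 else x := rfl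

lemma perm_pow_fix (p : Equiv.Perm ℤ) (x : ℤ) (h : p x = x) (n : ℕ) : (p ^ n) x = x := by
  induction n with
  | zero => simp
  | succ n ih => rw [pow_succ, Equiv.Perm.mul_apply, h, ih]

lemma myAPerm_pow (k : ℕ) (hk : 0 < k) (j : ℕ) (hj : j ≤ k) (x : ℤ) (hx : 0 ≤ x ∧ x ≤ (k:ℤ)-1) :
    ((myAPerm k hk) ^ j) x = if x + j ≤ (k:ℤ)-1 then x + j else x + j - k := by
  induction j with
  | zero => simp only [pow_zero, Equiv.Perm.one_apply, Nat.cast_zero]; split_ifs <;> omega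
  | succ j ih =>
    rw [pow_succ', Equiv.Perm.mul_apply, ih (by omega), myAPerm_apply]
    push_cast
    split_ifs <;> omega

lemma myAPerm_pow_k (k : ℕ) (hk : 0 < k) : (myAPerm k hk) ^ k = 1 := by
  ext x
  simp only [Equiv.Perm.one_apply]
  by_cases hx : 0 ≤ x ∧ x ≤ (k:ℤ)-1
  · rw [myAPerm_pow k hk k le_rfl x hx]
    split_ifs <;> omega
  · exact perm_pow_fix _ x (by rw [myAPerm_apply]; split_ifs <;> omega) k

def myBPerm (k : ℕ) (hk : 0 < k) : Equiv.Perm ℤ :=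
  (Equiv.addRight ((k:ℤ)-1)) * (myAPerm k hk) * (Equiv.addRight ((k:ℤ)-1))⁻¹

lemma myBPerm_pow_k (k : ℕ) (hk : 0 < k) : (myBPerm k hk) ^ k = 1 := by
  rw [myBPerm, conj_pow, myAPerm_pow_k k hk, mul_one, mul_inv_cancel]

lemma myBPerm_apply (k : ℕ) (hk : 0 < k) (x : ℤ) :
    myBPerm k hk x = (myAPerm k hk (x - ((k:ℤ)-1))) + ((k:ℤ)-1) := by
  simp only [myBPerm, Equiv.Perm.mul_apply, Equiv.Perm.inv_def, Equiv.addRight_symm,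
    Equiv.coe_addRight, sub_eq_add_neg]

lemma myAB_cycle (k : ℕ) (hk : 2 < k) (x : ℤ) (hx : 0 ≤ x ∧ x ≤ 2*(k:ℤ) - 3) :
    (myAPerm k (by omega) * myBPerm k (by omega)) x = x + 1 := by
  rw [Equiv.Perm.mul_apply, myBPerm_apply, myAPerm_apply, myAPerm_apply]
  split_ifs <;> omega

lemma myAB_pow (k : ℕ) (hk : 2 < k) (j : ℕ) (hj : j ≤ k) :
    ((myAPerm k (by omega) * myBPerm k (by omega)) ^ j) 0 = j := by
  induction j with
  | zero => simp
  | succ j ih =>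
    rw [pow_succ', Equiv.Perm.mul_apply, ih (by omega),
      myAB_cycle k hk _ (by constructor <;> omega)]
    push_cast; ring

/-- For `k > 2`, the element `(ab)^k` does not belong to the normal subgroup of the
free group on two generators `a, b` generated by `a^k` and `b^k`. -/
theorem ab_pow_not_mem_normalClosure (k : ℕ) (hk : 2 < k) :
    (FreeGroup.of true * FreeGroup.of false) ^ k ∉
      Subgroup.normalClosure
        ({FreeGroup.of true ^ k, FreeGroup.of false ^ k} : Set (FreeGroup Bool)) := by
  intro hmem
  have hk0 : 0 < k := by omega
  set φ : FreeGroup Bool →* Equiv.Perm ℤ :=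
    FreeGroup.lift (fun i => if i then myAPerm k hk0 else myBPerm k hk0) with hφ
  have hker : Subgroup.normalClosure
      ({FreeGroup.of true ^ k, FreeGroup.of false ^ k} : Set (FreeGroup Bool)) ≤ φ.ker := by
    apply Subgroup.normalClosure_le_normal
    rintro x (rfl | rfl)
    · simp [MonoidHom.mem_ker, hφ, myAPerm_pow_k k hk0]
    · simp [MonoidHom.mem_ker, hφ, myBPerm_pow_k k hk0]
  have h1 : φ ((FreeGroup.of true * FreeGroup.of false) ^ k) = 1 := hker hmem
  rw [map_pow, map_mul] at h1
  simp only [hφ, FreeGroup.lift_apply_of, if_true, Bool.false_eq_true, if_false] at h1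
  have h2 := congrArg (fun p : Equiv.Perm ℤ => p 0) h1
  simp only [Equiv.Perm.one_apply] at h2
  rw [myAB_pow k hk k le_rfl] at h2
  omega
end

section
/- Let ρ : B_3 → GL(2,ℂ) be a completely reducible representation factoring through the Temperley–Lieb quotient A_3(q) with q ≠ -1, normalized so that ρ(g_1) = diag(q, -1) and ρ(g_2) = U ρ(g_1) U^{-1} with U = [[a,b],[c,d]] ∈ SL(2,ℂ). Then the Temperley–Lieb relation 1 + ρ(g_1) + ρ(g_2) + ρ(g_1)ρ(g_2) + ρ(g_2)ρ(g_1) + ρ(g_1)ρ(g_2)ρ(g_1) = 0 holds if and only if q·a·d + b·c = -1/(q+1). -/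
open Matrix

set_option maxHeartbeats 1000000 in
/-- Let `ρ : B₃ → GL(2,ℂ)` be completely reducible, normalized with
`ρ(g₁) = diag(q,-1)` and `ρ(g₂) = U ρ(g₁) U⁻¹` for `U = [[a,b],[c,d]] ∈ SL(2,ℂ)`,
`q ≠ -1`. Then the Temperley–Lieb relation
`1 + ρ(g₁) + ρ(g₂) + ρ(g₁)ρ(g₂) + ρ(g₂)ρ(g₁) + ρ(g₁)ρ(g₂)ρ(g₁) = 0`
holds iff `q·a·d + b·c = -1/(q+1)`. -/
theorem TL_relation_iff (q a b c d : ℂ) (hq : q ≠ -1) (hdet : a * d - b * c = 1)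
    (U G₁ G₂ : Matrix (Fin 2) (Fin 2) ℂ)
    (hU : U = !![a, b; c, d])
    (hG₁ : G₁ = !![q, 0; 0, -1])
    (hG₂ : G₂ = U * G₁ * U⁻¹) :
    (1 + G₁ + G₂ + G₁ * G₂ + G₂ * G₁ + G₁ * G₂ * G₁ = 0) ↔
      q * a * d + b * c = -(q + 1)⁻¹ := by
  have hq1 : q + 1 ≠ 0 := fun h => hq (by linear_combination h)
  have hUinv : U⁻¹ = !![d, -b; -c, a] := by
    apply inv_eq_right_inv
    subst hU
    ext i j
    fin_cases i <;> fin_cases j <;>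
      simp [Matrix.mul_apply, Fin.sum_univ_succ] <;>
      first
        | ring1
        | linear_combination hdet
  subst hU hG₁
  rw [hUinv] at hG₂
  subst hG₂
  have key : (1 : Matrix (Fin 2) (Fin 2) ℂ) + !![q, 0; 0, -1] +
      !![a, b; c, d] * !![q, 0; 0, -1] * !![d, -b; -c, a] +
      !![q, 0; 0, -1] * (!![a, b; c, d] * !![q, 0; 0, -1] * !![d, -b; -c, a]) +
      !![a, b; c, d] * !![q, 0; 0, -1] * !![d, -b; -c, a] * !![q, 0; 0, -1] +
      !![q, 0; 0, -1] * (!![a, b; c, d] * !![q, 0; 0, -1] * !![d, -b; -c, a]) * !![q, 0; 0, -1]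
      = !![(q + 1) * (1 + (q + 1) * (q * a * d + b * c)), 0; 0, 0] := by
    ext i j
    fin_cases i <;> fin_cases j <;>
      simp [Matrix.mul_apply, Fin.sum_univ_succ] <;> ring
  rw [key]
  constructor
  · intro h
    have h00 := congrFun (congrFun h 0) 0
    simp at h00
    rcases h00 with h1 | h2
    · exact absurd h1 hq1
    · refine mul_left_cancel₀ hq1 ?_
      rw [mul_neg, mul_inv_cancel₀ hq1]
      linear_combination h2
  · intro h
    have h1 : (q + 1) * (q * a * d + b * c) = -1 := by
      rw [h, mul_neg, mul_inv_cancel₀ hq1]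
    have h' : 1 + (q + 1) * (q * a * d + b * c) = 0 := by linear_combination h1
    ext i j
    fin_cases i <;> fin_cases j <;> simp [h']
end

section
/- Let Δ(2,3,n) = ⟨α, u, v | α^n = u^3 = v^2 = αuv = 1⟩ be the (2,3,n) triangle group with n = 2k+1 odd. The subgroup generated by a = α², b = vα²v, c = uα²u² equals the whole group Δ(2,3,n); explicitly α = a^{k+1}, v = a^k b^k a^k, and u = a^{-1} b^k a^k. -/
/-- Relations of the `(n,3,2)` von Dyck triangle group
`⟨α, u, v | αⁿ = u³ = v² = αuv = 1⟩` on generators `α = 0`, `u = 1`, `v = 2`. -/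
def triangle23Rels (n : ℕ) : Set (FreeGroup (Fin 3)) :=
  {FreeGroup.of 0 ^ n, FreeGroup.of 1 ^ 3, FreeGroup.of 2 ^ 2,
    FreeGroup.of 0 * FreeGroup.of 1 * FreeGroup.of 2}

/-- The `(2,3,n)` triangle group for odd `n = 2k+1`. -/
abbrev Triangle23 (k : ℕ) := PresentedGroup (triangle23Rels (2 * k + 1))

/-!
Write `a = α²` and `b = vα²v`. Since `α` has odd order `2k+1`, `aᵏ = α⁻¹`, hence `α = a^{k+1}`
and `bᵏ = vα⁻¹v`. The relations `v² = 1` and `αuv = 1` give `u = α⁻¹v`, and then `u³ = 1`,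
i.e. `u² = u⁻¹ = vα`, reads `α⁻¹vα⁻¹v = vα`, that is `v = α⁻¹(vα⁻¹v)α⁻¹ = aᵏbᵏaᵏ`.
So `α`, `v` and `u = α⁻¹v` all lie in the subgroup generated by `a` and `b`.
-/

section Group

variable {G : Type*} [Group G] {k : ℕ} {α u v : G}

lemma inv_eq_self_of_sq_eq_one (hv : v ^ 2 = 1) : v⁻¹ = v :=
  inv_eq_of_mul_eq_one_left (by rwa [← sq])

lemma sq_pow_eq_inv_of_pow_eq_one (hα : α ^ (2 * k + 1) = 1) : (α ^ 2) ^ k = α⁻¹ := by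
  rw [← pow_mul, eq_inv_iff_mul_eq_one, ← pow_succ, hα]

lemma sq_pow_succ_of_pow_eq_one (hα : α ^ (2 * k + 1) = 1) : (α ^ 2) ^ (k + 1) = α := by
  rw [pow_succ, sq_pow_eq_inv_of_pow_eq_one hα]
  group

lemma conj_sq_pow_of_pow_eq_one (hα : α ^ (2 * k + 1) = 1) (hv : v ^ 2 = 1) :
    (v * α ^ 2 * v) ^ k = v * α⁻¹ * v := by
  have hv' := inv_eq_self_of_sq_eq_one hv
  calc (v * α ^ 2 * v) ^ k = (v * α ^ 2 * v⁻¹) ^ k := by rw [hv']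
    _ = v * α⁻¹ * v := by rw [conj_pow, sq_pow_eq_inv_of_pow_eq_one hα, hv']

lemma eq_inv_mul_of_mul_mul_eq_one (hv : v ^ 2 = 1) (h : α * u * v = 1) : u = α⁻¹ * v := by
  rw [eq_inv_mul_of_mul_eq (eq_inv_of_mul_eq_one_left h), inv_eq_self_of_sq_eq_one hv]

lemma eq_inv_mul_conj_inv_mul_inv (hu : u ^ 3 = 1) (hv : v ^ 2 = 1) (h : α * u * v = 1) :
    v = α⁻¹ * (v * α⁻¹ * v) * α⁻¹ := by
  have hu_sq : u * u = u⁻¹ := eq_inv_of_mul_eq_one_left (by rw [← pow_three', hu])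
  rw [eq_inv_mul_of_mul_mul_eq_one hv h, mul_inv_rev, inv_eq_self_of_sq_eq_one hv,
    inv_inv] at hu_sq
  calc v = v * α * α⁻¹ := by group
    _ = α⁻¹ * (v * α⁻¹ * v) * α⁻¹ := by rw [← hu_sq]; group

theorem eq_words_in_squares_of_triangle_relations (hα : α ^ (2 * k + 1) = 1) (hu : u ^ 3 = 1) (hv : v ^ 2 = 1)
    (h : α * u * v = 1) :
    α = (α ^ 2) ^ (k + 1) ∧
      v = (α ^ 2) ^ k * (v * α ^ 2 * v) ^ k * (α ^ 2) ^ k ∧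
      u = (α ^ 2)⁻¹ * (v * α ^ 2 * v) ^ k * (α ^ 2) ^ k := by
  rw [sq_pow_succ_of_pow_eq_one hα, sq_pow_eq_inv_of_pow_eq_one hα,
    conj_sq_pow_of_pow_eq_one hα hv]
  have hv_eq := eq_inv_mul_conj_inv_mul_inv hu hv h
  refine ⟨rfl, hv_eq, ?_⟩
  rw [eq_inv_mul_of_mul_mul_eq_one hv h]
  nth_rw 1 [hv_eq]
  group

end Group

namespace Triangle23

variable {k : ℕ}

lemma of_zero_pow : (PresentedGroup.of 0 : Triangle23 k) ^ (2 * k + 1) = 1 :=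
  PresentedGroup.one_of_mem (x := FreeGroup.of 0 ^ (2 * k + 1)) (by simp [triangle23Rels])

lemma of_one_pow : (PresentedGroup.of 1 : Triangle23 k) ^ 3 = 1 :=
  PresentedGroup.one_of_mem (x := FreeGroup.of 1 ^ 3) (by simp [triangle23Rels])

lemma of_two_sq : (PresentedGroup.of 2 : Triangle23 k) ^ 2 = 1 :=
  PresentedGroup.one_of_mem (x := FreeGroup.of 2 ^ 2) (by simp [triangle23Rels])

lemma of_mul_of_mul_of :
    (PresentedGroup.of 0 * PresentedGroup.of 1 * PresentedGroup.of 2 : Triangle23 k) = 1 :=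
  PresentedGroup.one_of_mem (x := FreeGroup.of 0 * FreeGroup.of 1 * FreeGroup.of 2)
    (by simp [triangle23Rels])

end Triangle23

theorem triangle23_generated_by_squares_general (k : ℕ)
    (α u v a b c : Triangle23 k)
    (hα : α = PresentedGroup.of 0) (hu : u = PresentedGroup.of 1)
    (hv : v = PresentedGroup.of 2)
    (ha : a = α ^ 2) (hb : b = v * α ^ 2 * v) :
    α = a ^ (k + 1) ∧ v = a ^ k * b ^ k * a ^ k ∧ u = a⁻¹ * b ^ k * a ^ k ∧
    Subgroup.closure {a, b, c} = (⊤ : Subgroup (Triangle23 k)) := by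
  obtain ⟨hα_eq, hv_eq, hu_eq⟩ := eq_words_in_squares_of_triangle_relations (hα ▸ Triangle23.of_zero_pow)
    (hu ▸ Triangle23.of_one_pow) (hv ▸ Triangle23.of_two_sq)
    (hα ▸ hu ▸ hv ▸ Triangle23.of_mul_of_mul_of)
  rw [← hb] at hv_eq hu_eq
  rw [← ha] at hα_eq hv_eq hu_eq
  refine ⟨hα_eq, hv_eq, hu_eq, ?_⟩
  have ha_mem : a ∈ Subgroup.closure {a, b, c} := Subgroup.subset_closure (by simp)
  have hb_mem : b ∈ Subgroup.closure {a, b, c} := Subgroup.subset_closure (by simp)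
  rw [eq_top_iff, ← PresentedGroup.closure_range_of, Subgroup.closure_le]
  rintro _ ⟨i, rfl⟩
  fin_cases i
  · exact hα ▸ hα_eq ▸ pow_mem ha_mem _
  · exact hu ▸ hu_eq ▸ mul_mem (mul_mem (inv_mem ha_mem) (pow_mem hb_mem _)) (pow_mem ha_mem _)
  · exact hv ▸ hv_eq ▸ mul_mem (mul_mem (pow_mem ha_mem _) (pow_mem hb_mem _)) (pow_mem ha_mem _)

/-- In `Δ(2,3,n)` with `n = 2k+1` odd, the subgroup generated by `a = α²`,
`b = vα²v`, `c = uα²u²` is the whole group; explicitly `α = a^{k+1}`,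
`v = aᵏbᵏaᵏ` and `u = a⁻¹bᵏaᵏ`. -/
theorem triangle23_generated_by_squares (k : ℕ) (hk : 1 ≤ k)
    (α u v a b c : Triangle23 k)
    (hα : α = PresentedGroup.of 0) (hu : u = PresentedGroup.of 1)
    (hv : v = PresentedGroup.of 2)
    (ha : a = α ^ 2) (hb : b = v * α ^ 2 * v) (hc : c = u * α ^ 2 * u ^ 2) :
    α = a ^ (k + 1) ∧ v = a ^ k * b ^ k * a ^ k ∧ u = a⁻¹ * b ^ k * a ^ k ∧
    Subgroup.closure {a, b, c} = (⊤ : Subgroup (Triangle23 k)) :=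
  triangle23_generated_by_squares_general k α u v a b c hα hu hv ha hb
end

section
/- For D ≥ 1, the abelianization H_1 of the commutator subgroup [G,G] of G = ℤ/Dℤ * ℤ/Dℤ (free product) is the quotient of the free abelian group on generators c_{ij}, 1 ≤ i,j ≤ D-1, with no relations; i.e., the kernel K of the abelianization map ℤ/Dℤ * ℤ/Dℤ → ℤ/Dℤ × ℤ/Dℤ is a free group freely generated by the commutators [ã^i, b̃^j] for 1 ≤ i,j ≤ D-1, where ã, b̃ generate the two free factors. -/
/-!
Every element of `A ∗ B` has a unique normal form `a * b * e w`, where `e` is the map from the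
free group on pairs of nontrivial elements sending `(a, b)` to `⁅a, b⁆`. Uniqueness comes from
an action of `A ∗ B` on the set of normal forms `((a, b), w)` for which evaluation is
equivariant: `A` acts by left multiplication on `a`, and `B` by left multiplication on `b`
in the swapped normal form `b * a * e w`; the two normal forms are related by a shear of `w`,
because `a * b = b * a * ⁅a⁻¹, b⁻¹⁆`. Acting by `e v` on `((1, 1), 1)` gives `((1, 1), v)`,
so `e` is injective; acting by `g` gives a normal form of `g`, whose `(a, b)` part is the
image of `g` in `A × B`, so the kernel of `A ∗ B → A × B` is the range of `e`.
-/

open Monoid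
open scoped commutatorElement

namespace Monoid.Coprod

variable {A B : Type*} [Group A] [Group B]

local notation "𝓕" A:max B:max => FreeGroup ({a : A // a ≠ 1} × {b : B // b ≠ 1})

def commutatorFreeHom : 𝓕 A B →* A ∗ B :=
  FreeGroup.lift fun p => ⁅(inl (p.1 : A) : A ∗ B), inr (p.2 : B)⁆

open Classical in
noncomputable def commutatorWord (a : A) (b : B) : 𝓕 A B :=
  if ha : a = 1 then 1 else if hb : b = 1 then 1 else .of (⟨a, ha⟩, ⟨b, hb⟩)

@[simp]
lemma commutatorWord_one_left (b : B) : commutatorWord (1 : A) b = 1 := by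
  simp [commutatorWord]

@[simp]
lemma commutatorWord_one_right (a : A) : commutatorWord a (1 : B) = 1 := by
  simp [commutatorWord]

lemma commutatorFreeHom_commutatorWord (a : A) (b : B) :
    commutatorFreeHom (commutatorWord a b) = ⁅(inl a : A ∗ B), inr b⁆ := by
  unfold commutatorWord
  split_ifs with ha hb
  · simp [ha]
  · simp [hb]
  · simp [commutatorFreeHom]

def ofNormalForm (x : (A × B) × 𝓕 A B) : A ∗ B :=
  inl x.1.1 * inr x.1.2 * commutatorFreeHom x.2

def ofSwappedNormalForm (x : (A × B) × 𝓕 A B) : A ∗ B :=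
  inr x.1.2 * inl x.1.1 * commutatorFreeHom x.2

noncomputable def normalFormShear : Equiv.Perm ((A × B) × 𝓕 A B) :=
  Equiv.prodShear (Equiv.refl _) fun p => Equiv.mulLeft (commutatorWord p.1⁻¹ p.2⁻¹)

lemma ofSwappedNormalForm_normalFormShear (x : (A × B) × 𝓕 A B) :
    ofSwappedNormalForm (normalFormShear x) = ofNormalForm x := by
  simp [ofSwappedNormalForm, ofNormalForm, normalFormShear, commutatorFreeHom_commutatorWord,
    commutatorElement_def, mul_assoc]

def normalFormTranslate : A × B →* Equiv.Perm ((A × B) × 𝓕 A B) where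
  toFun p := Equiv.prodCongr (Equiv.mulLeft p) (Equiv.refl _)
  map_one' := by ext <;> simp
  map_mul' p q := by ext <;> simp [mul_assoc]

lemma ofNormalForm_normalFormTranslate_left (a : A) (x : (A × B) × 𝓕 A B) :
    ofNormalForm (normalFormTranslate (a, 1) x) = inl a * ofNormalForm x := by
  simp [ofNormalForm, normalFormTranslate, mul_assoc]

lemma ofSwappedNormalForm_normalFormTranslate_right (b : B) (x : (A × B) × 𝓕 A B) :
    ofSwappedNormalForm (normalFormTranslate (1, b) x) = inr b * ofSwappedNormalForm x := by
  simp [ofSwappedNormalForm, normalFormTranslate, mul_assoc]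

noncomputable def normalFormAction : A ∗ B →* Equiv.Perm ((A × B) × 𝓕 A B) :=
  lift (normalFormTranslate.comp (.inl A B))
    ((MulAut.conj normalFormShear⁻¹).toMonoidHom.comp (normalFormTranslate.comp (.inr A B)))

lemma ofNormalForm_normalFormAction (g : A ∗ B) (x : (A × B) × 𝓕 A B) :
    ofNormalForm (normalFormAction g x) = g * ofNormalForm x := by
  induction g using Coprod.induction_on generalizing x with
  | inl a => exact ofNormalForm_normalFormTranslate_left a x
  | inr b =>
    simp only [normalFormAction, lift_apply_inr, MonoidHom.comp_apply, MulEquiv.coe_toMonoidHom,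
      MulAut.conj_apply, inv_inv, Equiv.Perm.mul_apply, MonoidHom.inr_apply]
    rw [← ofSwappedNormalForm_normalFormShear, ← ofSwappedNormalForm_normalFormShear,
      Equiv.Perm.coe_inv, Equiv.apply_symm_apply, ofSwappedNormalForm_normalFormTranslate_right]
  | mul g h ihg ihh => rw [map_mul, Equiv.Perm.mul_apply, ihg, ihh, mul_assoc]

lemma normalFormAction_commutator (a : A) (b : B) (w : 𝓕 A B) :
    normalFormAction ⁅(inl a : A ∗ B), inr b⁆ ((1, 1), w) =
      ((1, 1), commutatorWord a b * w) := by
  simp [normalFormAction, commutatorElement_def, normalFormShear, normalFormTranslate,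
    Equiv.prodShear]

lemma normalFormAction_commutatorFreeHom (v w : 𝓕 A B) :
    normalFormAction (commutatorFreeHom v) ((1, 1), w) = ((1, 1), v * w) := by
  induction v using FreeGroup.induction_on generalizing w with
  | C1 => simp
  | of p =>
    simpa [commutatorFreeHom, commutatorWord, p.1.2, p.2.2] using
      normalFormAction_commutator (p.1 : A) (p.2 : B) w
  | inv_of p ih =>
    rw [map_inv, map_inv, Equiv.Perm.inv_eq_iff_eq, ih, mul_inv_cancel_left]
  | mul v v' ihv ihv' => rw [map_mul, map_mul, Equiv.Perm.mul_apply, ihv', ihv, mul_assoc]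

theorem commutatorFreeHom_injective :
    Function.Injective (commutatorFreeHom (A := A) (B := B)) := by
  intro v v' h
  have hv := normalFormAction_commutatorFreeHom v 1
  rw [h, normalFormAction_commutatorFreeHom] at hv
  simpa using (congrArg Prod.snd hv).symm

lemma toProd_comp_commutatorFreeHom :
    (toProd : A ∗ B →* A × B).comp commutatorFreeHom = 1 :=
  FreeGroup.ext_hom _ _ fun p => by simp [commutatorFreeHom, commutatorElement_def]

lemma toProd_ofNormalForm (x : (A × B) × 𝓕 A B) : toProd (ofNormalForm x) = x.1 := by
  simp [ofNormalForm, ← MonoidHom.comp_apply, toProd_comp_commutatorFreeHom]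

lemma ofNormalForm_normalFormAction_one (g : A ∗ B) :
    ofNormalForm (normalFormAction g ((1, 1), 1)) = g := by
  simpa [ofNormalForm] using ofNormalForm_normalFormAction g ((1, 1), 1)

theorem range_commutatorFreeHom :
    (commutatorFreeHom (A := A) (B := B)).range = (toProd : A ∗ B →* A × B).ker := by
  refine le_antisymm (fun _ ⟨v, hv⟩ => hv ▸ DFunLike.congr_fun toProd_comp_commutatorFreeHom v)
    fun g hg => ?_
  have hx := ofNormalForm_normalFormAction_one g
  generalize normalFormAction g ((1, 1), 1) = x at hx
  obtain ⟨⟨a, b⟩, w⟩ := x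
  have hab : (a, b) = 1 := by
    rwa [← hx, MonoidHom.mem_ker, toProd_ofNormalForm] at hg
  obtain ⟨rfl, rfl⟩ := Prod.mk_eq_one.mp hab
  exact ⟨w, by simpa [ofNormalForm] using hx⟩

end Monoid.Coprod

lemma Multiplicative.ofAdd_one_pow {R : Type*} [AddMonoidWithOne R] (n : ℕ) :
    Multiplicative.ofAdd (1 : R) ^ n = .ofAdd (n : R) := by
  rw [← ofAdd_nsmul, nsmul_one]

noncomputable def ZMod.finPredEquivNeOne (D : ℕ) [NeZero D] :
    Fin (D - 1) ≃ {a : Multiplicative (ZMod D) // a ≠ 1} :=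
  Equiv.ofBijective
    (fun i => ⟨Multiplicative.ofAdd (1 : ZMod D) ^ ((i : ℕ) + 1), by
      rw [Multiplicative.ofAdd_one_pow, Ne, ofAdd_eq_one, ZMod.natCast_eq_zero_iff]
      exact Nat.not_dvd_of_pos_of_lt i.val.succ_pos (by omega)⟩)
    ⟨fun i j hij => by
      simp only [Subtype.mk.injEq, Multiplicative.ofAdd_one_pow,
        EmbeddingLike.apply_eq_iff_eq, ZMod.natCast_eq_natCast_iff',
        Nat.mod_eq_of_lt (show (i : ℕ) + 1 < D by omega),
        Nat.mod_eq_of_lt (show (j : ℕ) + 1 < D by omega)] at hij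
      exact Fin.ext (by omega),
    fun ⟨a, ha⟩ => by
      have hval : a.toAdd.val ≠ 0 := by simpa [ZMod.val_eq_zero] using ha
      refine ⟨⟨a.toAdd.val - 1, by have := ZMod.val_lt a.toAdd; omega⟩, Subtype.ext ?_⟩
      simp [Multiplicative.ofAdd_one_pow, Nat.sub_add_cancel (Nat.pos_of_ne_zero hval)]⟩

lemma ZMod.finPredEquivNeOne_apply (D : ℕ) [NeZero D] (i : Fin (D - 1)) :
    (ZMod.finPredEquivNeOne D i : Multiplicative (ZMod D)) =
      Multiplicative.ofAdd (1 : ZMod D) ^ ((i : ℕ) + 1) :=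
  rfl

/-- The kernel of the abelianization map `ℤ/D * ℤ/D → ℤ/D × ℤ/D` from the free product
of two cyclic groups of order `D` is a free group, freely generated by the commutators
`[ã^i, b̃^j]` for `1 ≤ i, j ≤ D-1`, where `ã, b̃` are the generators of the two factors. -/
theorem kernel_free_product_abelianization_free (D : ℕ) (hD : 1 ≤ D)
    (ta tb : Coprod (Multiplicative (ZMod D)) (Multiplicative (ZMod D)))
    (hta : ta = Coprod.inl (Multiplicative.ofAdd (1 : ZMod D)))
    (htb : tb = Coprod.inr (Multiplicative.ofAdd (1 : ZMod D)))
    (f : Coprod (Multiplicative (ZMod D)) (Multiplicative (ZMod D)) →*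
      Multiplicative (ZMod D) × Multiplicative (ZMod D))
    (hf : f = Coprod.lift
      (MonoidHom.inl (Multiplicative (ZMod D)) (Multiplicative (ZMod D)))
      (MonoidHom.inr (Multiplicative (ZMod D)) (Multiplicative (ZMod D)))) :
    ∃ e : FreeGroup (Fin (D - 1) × Fin (D - 1)) →*
        Coprod (Multiplicative (ZMod D)) (Multiplicative (ZMod D)),
      Function.Injective e ∧
      (∀ ij : Fin (D - 1) × Fin (D - 1),
        e (FreeGroup.of ij) = ⁅ta ^ ((ij.1 : ℕ) + 1), tb ^ ((ij.2 : ℕ) + 1)⁆) ∧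
      e.range = f.ker := by
  have : NeZero D := ⟨by omega⟩
  let reindex := FreeGroup.freeGroupCongr
    ((ZMod.finPredEquivNeOne D).prodCongr (ZMod.finPredEquivNeOne D))
  refine ⟨Coprod.commutatorFreeHom.comp (reindex : _ →* _),
    Coprod.commutatorFreeHom_injective.comp reindex.injective, fun ij => ?_, ?_⟩
  · simp [reindex, Coprod.commutatorFreeHom, ZMod.finPredEquivNeOne_apply, hta, htb]
  · rw [MonoidHom.range_comp, reindex.range_eq_top, ← MonoidHom.range_eq_map,
      Coprod.range_commutatorFreeHom, hf]
    rfl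
end

section
/- For D ≥ 4, the element [a, b] has infinite order in the triangle group Δ(D,D,D) = ⟨a, b | a^D = b^D = (ab)^D = 1⟩; consequently the subgroup generated by a^F and b^F is infinite for any F with 1 ≤ F < D dividing D. -/
/-- Relations of the `(D,D,D)` von Dyck triangle group
`Δ(D,D,D) = ⟨a, b | a^D = b^D = (ab)^D = 1⟩` on generators `a = 0`, `b = 1`. -/
def triRels (D : ℕ) : Set (FreeGroup (Fin 2)) :=
  {FreeGroup.of 0 ^ D, FreeGroup.of 1 ^ D, (FreeGroup.of 0 * FreeGroup.of 1) ^ D}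

/-- The `(D,D,D)` triangle group. -/
abbrev TriangleDDD (D : ℕ) := PresentedGroup (triRels D)

open scoped commutatorElement

/-! Let `ζ` be a primitive `D`-th root of unity and send `a`, `b` to the homotheties of ratio `ζ`
centred at `0` and `1`, i.e. `x ↦ ζx` and `x ↦ 1 + ζ(x - 1)`. Their product `x ↦ ζ²x + ζ(1 - ζ)`
is again a homothety, of ratio `ζ² ≠ 1`, so all three relations hold and this is a representation
of `Δ(D,D,D)` in the affine group of `ℂ`. The commutator of two homotheties with the same ratio
`r ≠ 1` and distinct centres is a nontrivial translation, so the image of `[a^F, b^F]` has infinite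
order for `0 < F < D`; this commutator lies in the subgroup generated by `a^F` and `b^F`. -/

namespace AffineEquiv

theorem not_isOfFinOrder_constVAdd {k V P : Type*} [Ring k] [AddCommGroup V] [Module k V]
    [AddTorsor V P] [IsAddTorsionFree V] {v : V} (hv : v ≠ 0) :
    ¬IsOfFinOrder (constVAdd k P v) := by
  have hinj : Function.Injective (constVAddHom k P) := fun v w hvw => by
    obtain ⟨p⟩ : Nonempty P := inferInstance
    exact Multiplicative.toAdd.injective (vadd_right_cancel p congr($hvw p))
  exact hinj.isOfFinOrder_iff.not.2 <|
    not_isOfFinOrder_of_isMulTorsionFree (a := Multiplicative.ofAdd v) (ofAdd_eq_one.not.2 hv)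

variable {K : Type*} [Field K]

theorem homothetyUnitsMulHom_zero_mul_homothetyUnitsMulHom_one (u : Kˣ) (hu : (1 + u : K) ≠ 0) :
    homothetyUnitsMulHom (0 : K) u * homothetyUnitsMulHom 1 u =
      homothetyUnitsMulHom (u / (1 + u) : K) (u ^ 2) := by
  ext x
  simp only [coe_mul, Function.comp_apply, coe_homothetyUnitsMulHom_apply,
    AffineMap.homothety_apply, vsub_eq_sub, vadd_eq_add, smul_eq_mul, Units.val_pow_eq_pow_val]
  field_simp
  ring

theorem commutatorElement_homothetyUnitsMulHom (p q : K) (r : Kˣ) :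
    ⁅homothetyUnitsMulHom p r, homothetyUnitsMulHom q r⁆ =
      constVAdd K K ((1 - r) ^ 2 * (p - q)) := by
  ext x
  simp only [commutatorElement_def, ← map_inv, coe_mul, Function.comp_apply,
    coe_homothetyUnitsMulHom_apply, AffineMap.homothety_apply, vsub_eq_sub, vadd_eq_add,
    smul_eq_mul, Units.val_inv_eq_inv_val, constVAdd_apply]
  field_simp
  ring

end AffineEquiv

theorem Subgroup.infinite_closure_pair_of_not_isOfFinOrder_commutatorElement {G : Type*} [Group G]
    {x y : G} (h : ¬IsOfFinOrder ⁅x, y⁆) : (closure {x, y} : Set G).Infinite := by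
  have hx : x ∈ closure {x, y} := subset_closure (by simp)
  have hy : y ∈ closure {x, y} := subset_closure (by simp)
  have hxy : ⁅x, y⁆ ∈ closure {x, y} := by
    rw [commutatorElement_def]
    exact mul_mem (mul_mem (mul_mem hx hy) (inv_mem hx)) (inv_mem hy)
  exact (infinite_zpowers.2 h).mono (zpowers_le.2 hxy)

namespace TriangleDDD

variable {D : ℕ}

section Lift

variable {G : Type*} [Group G] (x y : G) (hx : x ^ D = 1) (hy : y ^ D = 1)
  (hxy : (x * y) ^ D = 1)

def lift : TriangleDDD D →* G :=
  PresentedGroup.toGroup (f := ![x, y]) <| by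
    rintro r (rfl | rfl | rfl) <;> simp [hx, hy, hxy]

theorem lift_of_zero : lift x y hx hy hxy (PresentedGroup.of 0) = x :=
  PresentedGroup.toGroup.of _

theorem lift_of_one : lift x y hx hy hxy (PresentedGroup.of 1) = y :=
  PresentedGroup.toGroup.of _

end Lift

open AffineEquiv in
theorem not_isOfFinOrder_commutatorElement_pow {K : Type*} [Field K] [CharZero K] {ζ : Kˣ}
    (hζ : IsPrimitiveRoot ζ D) (hD : 2 < D) {F : ℕ} (hF : F ≠ 0) (hFD : F < D) :
    ¬IsOfFinOrder
      ⁅(PresentedGroup.of 0 : TriangleDDD D) ^ F, (PresentedGroup.of 1 : TriangleDDD D) ^ F⁆ := by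
  have hζ_pow : ∀ {k : ℕ}, k ≠ 0 → k < D → (ζ : K) ^ k ≠ 1 := fun hk hkD => by
    rw [← Units.val_pow_eq_pow_val, Ne, Units.val_eq_one]
    exact hζ.pow_ne_one_of_pos_of_lt hk hkD
  have hζ_ne_neg_one : (1 + ζ : K) ≠ 0 := fun h =>
    hζ_pow two_ne_zero hD (by rw [eq_neg_of_add_eq_zero_right h]; ring)
  have hA : homothetyUnitsMulHom (0 : K) ζ ^ D = 1 := by rw [← map_pow, hζ.pow_eq_one, map_one]
  have hB : homothetyUnitsMulHom (1 : K) ζ ^ D = 1 := by rw [← map_pow, hζ.pow_eq_one, map_one]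
  have hAB : (homothetyUnitsMulHom (0 : K) ζ * homothetyUnitsMulHom 1 ζ) ^ D = 1 := by
    rw [homothetyUnitsMulHom_zero_mul_homothetyUnitsMulHom_one ζ hζ_ne_neg_one, ← map_pow,
      ← pow_mul, mul_comm, pow_mul, hζ.pow_eq_one, one_pow, map_one]
  intro h
  apply not_isOfFinOrder_constVAdd (k := K) (P := K) (v := (1 - ζ ^ F : K) ^ 2 * (0 - 1))
  · exact mul_ne_zero (pow_ne_zero 2 (sub_ne_zero.2 (hζ_pow hF hFD).symm)) (by norm_num)
  · have := (lift _ _ hA hB hAB).isOfFinOrder h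
    rwa [map_commutatorElement, map_pow, map_pow, lift_of_zero, lift_of_one, ← map_pow, ← map_pow,
      commutatorElement_homothetyUnitsMulHom, Units.val_pow_eq_pow_val] at this

end TriangleDDD

/-- For `D ≥ 4`, `[a,b]` has infinite order in `Δ(D,D,D)`, and consequently the
subgroup generated by `a^F` and `b^F` is infinite for any `1 ≤ F < D` dividing `D`. -/
theorem commutator_infinite_order_triangleDDD (D : ℕ) (hD : 4 ≤ D)
    (a b : TriangleDDD D) (ha : a = PresentedGroup.of 0) (hb : b = PresentedGroup.of 1) :
    ¬ IsOfFinOrder ⁅a, b⁆ ∧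
    ∀ F : ℕ, 1 ≤ F → F < D → F ∣ D →
      ((Subgroup.closure {a ^ F, b ^ F} : Subgroup (TriangleDDD D)) :
        Set (TriangleDDD D)).Infinite := by
  subst ha hb
  have hζ := Complex.isPrimitiveRoot_exp D (by omega)
  have key : ∀ F, 1 ≤ F → F < D → ¬IsOfFinOrder ⁅(PresentedGroup.of 0 : TriangleDDD D) ^ F,
      (PresentedGroup.of 1 : TriangleDDD D) ^ F⁆ := fun F hF hFD =>
    TriangleDDD.not_isOfFinOrder_commutatorElement_pow
      (hζ.isUnit_unit (by omega)) (by omega) (by omega) hFD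
  exact ⟨by simpa using key 1 le_rfl (by omega), fun F hF hFD _ =>
    Subgroup.infinite_closure_pair_of_not_isOfFinOrder_commutatorElement (key F hF hFD)⟩
end

section
/- Let b ∈ B_n be a pure braid in the k-th term of the lower central series of PB_n, and let A(b) ∈ Aut(F_n) be its image under the Artin representation, so that A(b)(x_i) = l_i(b)^{-1} x_i l_i(b) for longitudes l_i(b). Then each longitude l_i(b) lies in the k-th term of the lower central series of the free group F_n. -/
/-- The braid relations on `m` generators `σ₁,…,σ_m` (braid group on `m+1` strands):
`σᵢσⱼσᵢ = σⱼσᵢσⱼ` for `|i-j| = 1` and `σᵢσⱼ = σⱼσᵢ` for `|i-j| ≥ 2`. -/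
def braidRels (m : ℕ) : Set (FreeGroup (Fin m)) :=
  {r | (∃ i j : Fin m, (i : ℕ) + 1 = (j : ℕ) ∧
          r = FreeGroup.of i * FreeGroup.of j * FreeGroup.of i *
              (FreeGroup.of j * FreeGroup.of i * FreeGroup.of j)⁻¹) ∨
       (∃ i j : Fin m, (i : ℕ) + 1 < (j : ℕ) ∧
          r = FreeGroup.of i * FreeGroup.of j * (FreeGroup.of j * FreeGroup.of i)⁻¹)}

/-- The braid group on `m+1` strands. -/
abbrev BraidGroup (m : ℕ) := PresentedGroup (braidRels m)

/-!
Indices follow Mathlib: `lowerCentralSeries 0` is the whole group, so the `k`-th term `G_(k)` of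
the paper is `lowerCentralSeries (k - 1)`.

Call an automorphism of a group with generators `xᵢ` basis-conjugating of level `n` if it sends
each `xᵢ` to `u⁻¹ xᵢ u` with `u ∈ γₙ`. Pure braids act with level `0`. If `φ` has level `n` and
`ψ` level `0`, the conjugator of `⁅φ, ψ⁆` is congruent modulo `γₙ₊₁` to the commutator of the two
conjugators, because an automorphism acting trivially on `G ⧸ γ₁` acts trivially on every
`γₚ ⧸ γₚ₊₁` (a consequence of the three subgroup lemma `⁅γₐ, γ_b⁆ ≤ γₐ₊_b₊₁`). By induction a
braid in `γₖ₋₁` of the pure braid group has conjugators `uᵢ ∈ γₖ₋₁` of the free group. Finally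
the centralizer of `xᵢ` in the free group is `⟨xᵢ⟩`, so any other conjugator `lᵢ` differs from
`uᵢ` by a power of `xᵢ`, which the exponent normalisation kills.
-/

open Subgroup
open scoped commutatorElement

namespace Subgroup

variable {G : Type*} [Group G]

theorem Characteristic.apply_mem {H : Subgroup G} [hH : H.Characteristic] (φ : MulAut G)
    {g : G} (hg : g ∈ H) : φ g ∈ H := by
  rw [← hH.fixed φ] at hg
  exact hg

theorem commutator_commutator_le_of_rotate {H₁ H₂ H₃ N : Subgroup G} [N.Normal]
    (h₁ : ⁅⁅H₂, H₃⁆, H₁⁆ ≤ N) (h₂ : ⁅⁅H₃, H₁⁆, H₂⁆ ≤ N) : ⁅⁅H₁, H₂⁆, H₃⁆ ≤ N := by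
  simp_rw [← QuotientGroup.ker_mk' N, ← map_eq_bot_iff, map_commutator] at h₁ h₂ ⊢
  exact commutator_commutator_eq_bot_of_rotate h₁ h₂

theorem commutator_lowerCentralSeries_le (a b : ℕ) :
    ⁅(⊤ : Subgroup G).lowerCentralSeries a, (⊤ : Subgroup G).lowerCentralSeries b⁆ ≤
      (⊤ : Subgroup G).lowerCentralSeries (a + b + 1) := by
  induction b generalizing a with
  | zero => rfl
  | succ b ih =>
    rw [lowerCentralSeries_succ, commutator_comm]
    apply commutator_commutator_le_of_rotate
    · rw [commutator_comm ⊤, ← lowerCentralSeries_succ]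
      exact (ih (a + 1)).trans_eq (by congr 1; omega)
    · exact commutator_mono (ih a) le_rfl

end Subgroup

section Commutators

variable {G : Type*} [Group G]

theorem QuotientGroup.mk_commutatorElement (N : Subgroup G) [N.Normal] (a b : G) :
    ((⁅a, b⁆ : G) : G ⧸ N) = ⁅(a : G ⧸ N), (b : G ⧸ N)⁆ :=
  map_commutatorElement (QuotientGroup.mk' N) a b

theorem QuotientGroup.commute_mk_of_commutatorElement_mem {N : Subgroup G} [N.Normal] {a b : G}
    (h : ⁅a, b⁆ ∈ N) : Commute (a : G ⧸ N) b := by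
  rw [← commutatorElement_eq_one_iff_commute, ← QuotientGroup.mk_commutatorElement,
    QuotientGroup.eq_one_iff]
  exact h

theorem commutatorElement_mul_mul_eq {a b r s : G} (hr : Commute r (b * s)) (hs : Commute a s) :
    ⁅a * r, b * s⁆ = ⁅a, b⁆ :=
  calc ⁅a * r, b * s⁆ = a * (r * (b * s)) * r⁻¹ * a⁻¹ * s⁻¹ * b⁻¹ := by group
    _ = a * b * (s * a⁻¹) * s⁻¹ * b⁻¹ := by rw [hr.eq]; group
    _ = a * b * (a⁻¹ * s) * s⁻¹ * b⁻¹ := by rw [hs.inv_left.eq]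
    _ = ⁅a, b⁆ := by group

end Commutators

section ActingTrivially

variable {G : Type*} [Group G]

def MulAut.actingTriviallyModulo (N : Subgroup G) [N.Characteristic] : Subgroup (MulAut G) where
  carrier := {φ | ∀ g, (φ g : G ⧸ N) = g}
  one_mem' _ := rfl
  mul_mem' {φ ψ} hφ hψ g := (hφ (ψ g)).trans (hψ g)
  inv_mem' {φ} hφ g := by simpa using (hφ (φ⁻¹ g)).symm

open MulAut

instance (N : Subgroup G) [N.Characteristic] : (actingTriviallyModulo N).Normal where
  conj_mem φ hφ ρ g := by
    have h := QuotientGroup.eq.mp (hφ (ρ⁻¹ g))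
    refine QuotientGroup.eq.mpr ?_
    simpa using Subgroup.Characteristic.apply_mem ρ h

theorem MulAut.mem_actingTriviallyModulo_of_closure {N : Subgroup G} [N.Characteristic]
    {ι : Type*} {x : ι → G} (hx : closure (Set.range x) = ⊤) {φ : MulAut G}
    (h : ∀ i, (φ (x i) : G ⧸ N) = x i) : φ ∈ actingTriviallyModulo N := fun g => by
  have : Set.EqOn ((QuotientGroup.mk' N).comp φ.toMonoidHom) (QuotientGroup.mk' N)
      (Set.range x) := by
    rintro _ ⟨i, rfl⟩
    exact h i
  exact MonoidHom.eqOn_closure this (hx ▸ mem_top g)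

theorem mk_apply_eq_of_mem_lowerCentralSeries (f : G →* G)
    (hf : ∀ g, (f g : G ⧸ (⊤ : Subgroup G).lowerCentralSeries 1) = g) {p : ℕ} {w : G}
    (hw : w ∈ (⊤ : Subgroup G).lowerCentralSeries p) :
    (f w : G ⧸ (⊤ : Subgroup G).lowerCentralSeries (p + 1)) = w := by
  induction p generalizing w with
  | zero => exact hf w
  | succ p ih =>
    suffices ⁅(⊤ : Subgroup G).lowerCentralSeries p, ⊤⁆ ≤
        ((QuotientGroup.mk' _).comp f).eqLocus (QuotientGroup.mk' _) from this hw
    refine commutator_le.mpr fun a ha b _ => ?_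
    obtain ⟨r, hr, hfa⟩ : ∃ r ∈ (⊤ : Subgroup G).lowerCentralSeries (p + 1), f a = a * r :=
      ⟨a⁻¹ * f a, QuotientGroup.eq.mp (ih ha).symm, (mul_inv_cancel_left a _).symm⟩
    obtain ⟨s, hs, hfb⟩ : ∃ s ∈ (⊤ : Subgroup G).lowerCentralSeries 1, f b = b * s :=
      ⟨b⁻¹ * f b, QuotientGroup.eq.mp (hf b).symm, (mul_inv_cancel_left b _).symm⟩
    have hr_comm : Commute (r : G ⧸ (⊤ : Subgroup G).lowerCentralSeries (p + 2)) ↑(b * s) :=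
      QuotientGroup.commute_mk_of_commutatorElement_mem
        (commutator_mem_commutator hr (mem_top _))
    have hs_comm : Commute (a : G ⧸ (⊤ : Subgroup G).lowerCentralSeries (p + 2)) s :=
      QuotientGroup.commute_mk_of_commutatorElement_mem
        (commutator_lowerCentralSeries_le p 1 (commutator_mem_commutator ha hs))
    rw [QuotientGroup.mk_mul] at hr_comm
    show ((f ⁅a, b⁆ : G) : G ⧸ (⊤ : Subgroup G).lowerCentralSeries (p + 2)) = (⁅a, b⁆ : G)
    rw [map_commutatorElement, hfa, hfb, QuotientGroup.mk_commutatorElement,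
      QuotientGroup.mk_commutatorElement, QuotientGroup.mk_mul, QuotientGroup.mk_mul]
    exact commutatorElement_mul_mul_eq hr_comm hs_comm

end ActingTrivially

section BasisConjugating

variable {G : Type*} [Group G]

theorem MulAut.mul_apply_eq_conj {α β : MulAut G} {X u v : G} (hα : α X = u⁻¹ * X * u)
    (hβ : β X = v⁻¹ * X * v) : (α * β) X = (u * α v)⁻¹ * X * (u * α v) := by
  rw [MulAut.mul_apply, hβ, map_mul, map_mul, map_inv, hα]
  group

theorem MulAut.inv_apply_eq_conj {α : MulAut G} {X u : G} (hα : α X = u⁻¹ * X * u) :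
    α⁻¹ X = (α⁻¹ u)⁻¹⁻¹ * X * (α⁻¹ u)⁻¹ := by
  apply α.injective
  rw [MulAut.apply_inv_self, map_mul, map_mul, map_inv, map_inv, MulAut.apply_inv_self, hα]
  group

variable {ι : Type*} (x : ι → G)

def basisConjugating (n : ℕ) : Subgroup (MulAut G) where
  carrier := {φ | ∀ i, ∃ u ∈ (⊤ : Subgroup G).lowerCentralSeries n, φ (x i) = u⁻¹ * x i * u}
  one_mem' i := ⟨1, one_mem _, by simp⟩
  mul_mem' {φ ψ} hφ hψ i := by
    obtain ⟨u, hu, hφi⟩ := hφ i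
    obtain ⟨v, hv, hψi⟩ := hψ i
    exact ⟨u * φ v, mul_mem hu (Subgroup.Characteristic.apply_mem φ hv),
      MulAut.mul_apply_eq_conj hφi hψi⟩
  inv_mem' {φ} hφ i := by
    obtain ⟨u, hu, hφi⟩ := hφ i
    exact ⟨(φ⁻¹ u)⁻¹, inv_mem (Subgroup.Characteristic.apply_mem φ⁻¹ hu),
      MulAut.inv_apply_eq_conj hφi⟩

variable {x}

theorem basisConjugating_le_actingTriviallyModulo (hx : closure (Set.range x) = ⊤) (n : ℕ) :
    basisConjugating x n ≤
      MulAut.actingTriviallyModulo ((⊤ : Subgroup G).lowerCentralSeries (n + 1)) := by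
  intro φ hφ
  refine MulAut.mem_actingTriviallyModulo_of_closure hx fun i => QuotientGroup.eq.mpr ?_
  obtain ⟨u, hu, hφi⟩ := hφ i
  rw [hφi, show (u⁻¹ * x i * u)⁻¹ * x i = ⁅u⁻¹, (x i)⁻¹⁆ by group]
  exact commutator_mem_commutator (inv_mem hu) (mem_top _)

theorem commutatorElement_mem_basisConjugating (hx : closure (Set.range x) = ⊤) {n : ℕ}
    {φ ψ : MulAut G} (hφ : φ ∈ basisConjugating x n) (hψ : ψ ∈ basisConjugating x 0) :
    ⁅φ, ψ⁆ ∈ basisConjugating x (n + 1) := by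
  intro i
  obtain ⟨u, hu, hφi⟩ := hφ i
  obtain ⟨v, -, hψi⟩ := hψ i
  have hconj := MulAut.mul_apply_eq_conj (MulAut.mul_apply_eq_conj
    (MulAut.mul_apply_eq_conj hφi hψi) (MulAut.inv_apply_eq_conj hφi))
    (MulAut.inv_apply_eq_conj hψi)
  rw [← commutatorElement_def] at hconj
  refine ⟨_, ?_, hconj⟩
  -- Modulo `γₙ₊₁`, the conjugator `u · φ v · ((φ ψ φ⁻¹) u)⁻¹ · (⁅φ, ψ⁆ v)⁻¹` reduces to `⁅u, v⁆`.
  set N := (⊤ : Subgroup G).lowerCentralSeries (n + 1)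
  have hφN := basisConjugating_le_actingTriviallyModulo hx n hφ
  have hcommN : ⁅φ, ψ⁆ ∈ MulAut.actingTriviallyModulo N :=
    commutator_le_left _ _ (commutator_mem_commutator hφN (mem_top ψ))
  have hσu : ((φ * ψ * φ⁻¹) u : G ⧸ N) = u :=
    mk_apply_eq_of_mem_lowerCentralSeries (φ * ψ * φ⁻¹ : MulAut G).toMonoidHom
      (Normal.conj_mem inferInstance ψ (basisConjugating_le_actingTriviallyModulo hx 0 hψ) φ) hu
  have hσ_apply : (φ * ψ) (φ⁻¹ u)⁻¹ = ((φ * ψ * φ⁻¹) u)⁻¹ := by rw [map_inv]; rfl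
  have hcomm_apply : (φ * ψ * φ⁻¹) (ψ⁻¹ v)⁻¹ = (⁅φ, ψ⁆ v)⁻¹ := by
    rw [map_inv, commutatorElement_def]; rfl
  rw [hσ_apply, hcomm_apply, ← QuotientGroup.eq_one_iff]
  simp only [QuotientGroup.mk_mul, QuotientGroup.mk_inv]
  rw [hσu, hφN v, hcommN v, ← commutatorElement_def, ← QuotientGroup.mk_commutatorElement,
    QuotientGroup.eq_one_iff]
  exact commutator_mem_commutator hu (mem_top v)

theorem lowerCentralSeries_basisConjugating_le (hx : closure (Set.range x) = ⊤) (q : ℕ) :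
    (basisConjugating x 0).lowerCentralSeries q ≤ basisConjugating x q := by
  induction q with
  | zero => rfl
  | succ q ih =>
    exact commutator_le.mpr fun φ hφ ψ hψ => commutatorElement_mem_basisConjugating hx (ih hφ) hψ

theorem map_lowerCentralSeries_le_basisConjugating {K : Type*} [Group K]
    (hx : closure (Set.range x) = ⊤) (f : K →* MulAut G) (hf : f.range ≤ basisConjugating x 0)
    (q : ℕ) : ((⊤ : Subgroup K).lowerCentralSeries q).map f ≤ basisConjugating x q := by
  rw [map_lowerCentralSeries, ← MonoidHom.range_eq_map]
  exact (lowerCentralSeries_mono q hf).trans (lowerCentralSeries_basisConjugating_le hx q)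

def permConjugating (x : ι → G) : Subgroup (MulAut G × Equiv.Perm ι) where
  carrier := {p | ∀ i, IsConj (x (p.2 i)) (p.1 (x i))}
  one_mem' _ := IsConj.refl _
  mul_mem' {p q} hp hq i := (hp (q.2 i)).trans (p.1.toMonoidHom.map_isConj (hq i))
  inv_mem' {p} hp i := by
    simpa using (p.1⁻¹.toMonoidHom.map_isConj (hp (p.2⁻¹ i))).symm

theorem mem_basisConjugating_zero_of_isConj {K : Type*} [Group K] {π : K →* Equiv.Perm ι}
    {A : K →* MulAut G} (hconj : ∀ b i, IsConj (x (π b i)) (A b (x i))) {b : K}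
    (hb : b ∈ π.ker) : A b ∈ basisConjugating x 0 := fun i => by
  have := hconj b i
  rw [MonoidHom.mem_ker.mp hb, Equiv.Perm.one_apply, isConj_iff] at this
  obtain ⟨c, hc⟩ := this
  exact ⟨c⁻¹, mem_top _, by rw [inv_inv, hc]⟩

end BasisConjugating

namespace FreeGroup

variable {α : Type*}

theorem mk_singleton_mem_zpowers (a : α) (b : Bool) : mk [(a, b)] ∈ zpowers (of a) := by
  cases b
  · have : mk [(a, false)] = (of a)⁻¹ := by simp [of, inv_mk, invRev]
    exact this ▸ inv_mem (mem_zpowers (of a))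
  · exact mem_zpowers (of a)

variable [DecidableEq α]

theorem norm_mk_singleton_mul_lt {w : FreeGroup α} {a : α} {b : Bool} {T : List (α × Bool)}
    (hw : w.toWord = (a, b) :: T) : norm (mk [(a, !b)] * w) < norm w := by
  have hT : IsReduced T := (hw ▸ isReduced_toWord (x := w)).tail
  have : (mk [(a, !b)] * w).toWord = T := by
    rw [← mk_toWord (x := w), hw, mul_mk, toWord_mk, List.singleton_append,
      reduce.Step.eq Red.Step.cons_not_rev, hT.reduce_eq]
  simp [norm, this, hw]

theorem norm_of_mul_mul_inv_of {w : FreeGroup α} {a : α} (hw : w ≠ 1)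
    (hhead : ∀ b, (a, b) ∉ w.toWord.head?) (hlast : ∀ b, (a, b) ∉ w.toWord.getLast?) :
    norm (of a * w * (of a)⁻¹) = norm w + 2 := by
  have hne : w.toWord ≠ [] := mt toWord_eq_nil_iff.mp hw
  have hred : IsReduced ((a, true) :: (w.toWord ++ [(a, false)])) := by
    refine List.isChain_cons.mpr ⟨fun p hp h => ?_, List.isChain_append.mpr
      ⟨isReduced_toWord, List.isChain_singleton _, fun p hp q hq h => ?_⟩⟩
    · rw [List.head?_append_of_ne_nil _ hne] at hp
      exact absurd (by rwa [show a = p.1 from h]) (hhead p.2)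
    · simp only [List.head?_cons, Option.mem_def, Option.some.injEq] at hq
      subst hq
      exact absurd (by rwa [show a = p.1 from h.symm]) (hlast p.2)
  have : of a * w * (of a)⁻¹ = mk ((a, true) :: (w.toWord ++ [(a, false)])) := by
    rw [of, inv_mk, ← mk_toWord (x := w), mul_mk, mul_mk, toWord_mk]
    simp [invRev]
  rw [this, norm, toWord_mk, hred.reduce_eq, norm]
  simp

theorem exists_mem_zpowers_norm_mul_lt {a : α} {w : FreeGroup α} (h : Commute (of a) w)
    (hw : w ≠ 1) : ∃ g ∈ zpowers (of a), norm (g * w) < norm w := by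
  by_cases hhead : ∃ b, (a, b) ∈ w.toWord.head?
  · obtain ⟨b, hb⟩ := hhead
    obtain ⟨T, hT⟩ := List.head?_eq_some_iff.mp hb
    exact ⟨_, mk_singleton_mem_zpowers _ _, norm_mk_singleton_mul_lt hT⟩
  by_cases hinv : ∃ b, (a, b) ∈ w⁻¹.toWord.head?
  · obtain ⟨b, hb⟩ := hinv
    obtain ⟨T, hT⟩ := List.head?_eq_some_iff.mp hb
    have hg := mk_singleton_mem_zpowers a (!b)
    refine ⟨(mk [(a, !b)])⁻¹, inv_mem hg, ?_⟩
    obtain ⟨k, hk⟩ := mem_zpowers_iff.mp hg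
    have hcomm : Commute w (mk [(a, !b)])⁻¹ := (hk ▸ (h.zpow_left k).symm).inv_right
    rw [← hcomm.eq, ← norm_inv_eq, mul_inv_rev, inv_inv, ← norm_inv_eq (x := w)]
    exact norm_mk_singleton_mul_lt hT
  push Not at hhead hinv
  -- Otherwise conjugation by `of a` would lengthen `w`, yet it fixes `w`.
  refine absurd (norm_of_mul_mul_inv_of hw hhead fun b hb => ?_) ?_
  · apply hinv (!b)
    simpa [toWord_inv, invRev, List.head?_reverse] using hb
  · rw [h.eq, mul_inv_cancel_right]
    omega

theorem mem_zpowers_of_commute_of {a : α} {w : FreeGroup α} (h : Commute (of a) w) :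
    w ∈ zpowers (of a) := by
  induction hn : norm w using Nat.strong_induction_on generalizing w with
  | _ n ih =>
    by_cases hw : w = 1
    · exact hw ▸ one_mem _
    obtain ⟨g, hg, hlt⟩ := exists_mem_zpowers_norm_mul_lt h hw
    obtain ⟨k, rfl⟩ := mem_zpowers_iff.mp hg
    have := ih _ (hn ▸ hlt) (((Commute.refl (of a)).zpow_right k).mul_right h) rfl
    simpa using mul_mem (zpow_mem_zpowers (of a) (-k)) this

theorem eq_of_conj_eq_of_map_eq {a : α} {u l : FreeGroup α}
    (e : FreeGroup α →* Multiplicative ℤ) (he : e (of a) = .ofAdd 1)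
    (h : u⁻¹ * of a * u = l⁻¹ * of a * l) (hel : e u = e l) : u = l := by
  have hc : Commute (of a) (l * u⁻¹) :=
    calc of a * (l * u⁻¹) = l * (l⁻¹ * of a * l) * u⁻¹ := by group
      _ = l * (u⁻¹ * of a * u) * u⁻¹ := by rw [h]
      _ = l * u⁻¹ * of a := by group
  obtain ⟨k, hk⟩ := mem_zpowers_iff.mp (mem_zpowers_of_commute_of hc)
  have hek := congrArg e hk
  rw [map_zpow, he, _root_.map_mul, _root_.map_inv, hel, mul_inv_cancel, ← ofAdd_zsmul,
    smul_eq_mul, mul_one, ofAdd_eq_one] at hek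
  rw [hek, zpow_zero, eq_comm, mul_inv_eq_one] at hk
  exact hk.symm

end FreeGroup

theorem artin_isConj {m : ℕ} {π : BraidGroup m →* Equiv.Perm (Fin (m + 1))}
    (hπ : ∀ i : Fin m, π (PresentedGroup.of i) = Equiv.swap i.castSucc i.succ)
    {A : BraidGroup m →* MulAut (FreeGroup (Fin (m + 1)))}
    (hA : ∀ i : Fin m,
      A (PresentedGroup.of i) (FreeGroup.of i.castSucc) =
        FreeGroup.of i.castSucc * FreeGroup.of i.succ * (FreeGroup.of i.castSucc)⁻¹ ∧
      A (PresentedGroup.of i) (FreeGroup.of i.succ) = FreeGroup.of i.castSucc ∧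
      ∀ j : Fin (m + 1), j ≠ i.castSucc → j ≠ i.succ →
        A (PresentedGroup.of i) (FreeGroup.of j) = FreeGroup.of j)
    (b : BraidGroup m) (i : Fin (m + 1)) :
    IsConj (FreeGroup.of (π b i)) (A b (FreeGroup.of i)) := by
  suffices ⊤ ≤ (permConjugating FreeGroup.of).comap (A.prod π) from this (mem_top b) i
  rw [← PresentedGroup.closure_range_of, closure_le]
  rintro _ ⟨j, rfl⟩ i
  obtain ⟨hcastSucc, hsucc, hother⟩ := hA j
  show IsConj (FreeGroup.of (π (PresentedGroup.of j) i)) (A (PresentedGroup.of j) (FreeGroup.of i))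
  rw [hπ j]
  by_cases h₁ : i = j.castSucc
  · rw [h₁, Equiv.swap_apply_left, hcastSucc]
    exact isConj_iff.mpr ⟨_, rfl⟩
  by_cases h₂ : i = j.succ
  · rw [h₂, Equiv.swap_apply_right, hsucc]
  · rw [Equiv.swap_apply_of_ne_of_ne h₁ h₂, hother i h₁ h₂]

theorem longitudes_in_lowerCentralSeries_general (m k : ℕ)
    (π : BraidGroup m →* Equiv.Perm (Fin (m + 1)))
    (hπ : ∀ i : Fin m, π (PresentedGroup.of i) = Equiv.swap i.castSucc i.succ)
    (A : BraidGroup m →* MulAut (FreeGroup (Fin (m + 1))))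
    (hA : ∀ i : Fin m,
      A (PresentedGroup.of i) (FreeGroup.of i.castSucc) =
        FreeGroup.of i.castSucc * FreeGroup.of i.succ * (FreeGroup.of i.castSucc)⁻¹ ∧
      A (PresentedGroup.of i) (FreeGroup.of i.succ) = FreeGroup.of i.castSucc ∧
      ∀ j : Fin (m + 1), j ≠ i.castSucc → j ≠ i.succ →
        A (PresentedGroup.of i) (FreeGroup.of j) = FreeGroup.of j)
    (b : BraidGroup m)
    (hb : b ∈ Subgroup.map π.ker.subtype (Subgroup.lowerCentralSeries (⊤ : Subgroup ↥π.ker) (k - 1))) :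
    ∀ i : Fin (m + 1), ∀ l : FreeGroup (Fin (m + 1)),
      A b (FreeGroup.of i) = l⁻¹ * FreeGroup.of i * l →
      FreeGroup.lift (fun j => if j = i then Multiplicative.ofAdd (1 : ℤ) else 1) l = 1 →
      l ∈ Subgroup.lowerCentralSeries (⊤ : Subgroup (FreeGroup (Fin (m + 1)))) (k - 1) := by
  intro i l hl hexp
  have hpure : (A.comp π.ker.subtype).range ≤ basisConjugating FreeGroup.of 0 := by
    rintro _ ⟨c, rfl⟩
    exact mem_basisConjugating_zero_of_isConj (artin_isConj hπ hA) c.2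
  obtain ⟨c, hc, rfl⟩ := hb
  obtain ⟨u, hu, hAu⟩ := map_lowerCentralSeries_le_basisConjugating
    (FreeGroup.closure_range_of _) _ hpure (k - 1) (mem_map_of_mem _ hc) i
  rcases (k - 1).eq_zero_or_pos with hk0 | hkpos
  · exact hk0 ▸ mem_top l
  have heu : FreeGroup.lift (fun j => if j = i then Multiplicative.ofAdd (1 : ℤ) else 1) u = 1 :=
    Abelianization.commutator_subset_ker _ (Subgroup.lowerCentralSeries_antitone _ hkpos hu)
  rwa [← FreeGroup.eq_of_conj_eq_of_map_eq _ (by simp) (hAu.symm.trans hl)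
    (heu.trans hexp.symm)]

/-- If a pure braid `b` lies in the `k`-th term of the lower central series of the pure
braid group, then each of its longitudes `l_i(b)` (the conjugating elements in the Artin
action `A(b)(xᵢ) = lᵢ(b)⁻¹ xᵢ lᵢ(b)`, normalized so that the total exponent of `xᵢ` in
`lᵢ(b)` is zero) lies in the `k`-th term of the lower central series of the free group. -/
theorem longitudes_in_lowerCentralSeries (m k : ℕ) (hm : 1 ≤ m) (hk : 1 ≤ k)
    (π : BraidGroup m →* Equiv.Perm (Fin (m + 1)))
    (hπ : ∀ i : Fin m, π (PresentedGroup.of i) = Equiv.swap i.castSucc i.succ)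
    (A : BraidGroup m →* MulAut (FreeGroup (Fin (m + 1))))
    (hA : ∀ i : Fin m,
      A (PresentedGroup.of i) (FreeGroup.of i.castSucc) =
        FreeGroup.of i.castSucc * FreeGroup.of i.succ * (FreeGroup.of i.castSucc)⁻¹ ∧
      A (PresentedGroup.of i) (FreeGroup.of i.succ) = FreeGroup.of i.castSucc ∧
      ∀ j : Fin (m + 1), j ≠ i.castSucc → j ≠ i.succ →
        A (PresentedGroup.of i) (FreeGroup.of j) = FreeGroup.of j)
    (b : BraidGroup m)
    (hb : b ∈ Subgroup.map π.ker.subtype (Subgroup.lowerCentralSeries (⊤ : Subgroup ↥π.ker) (k - 1))) :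
    ∀ i : Fin (m + 1), ∀ l : FreeGroup (Fin (m + 1)),
      A b (FreeGroup.of i) = l⁻¹ * FreeGroup.of i * l →
      FreeGroup.lift (fun j => if j = i then Multiplicative.ofAdd (1 : ℤ) else 1) l = 1 →
      l ∈ Subgroup.lowerCentralSeries (⊤ : Subgroup (FreeGroup (Fin (m + 1)))) (k - 1) :=
  longitudes_in_lowerCentralSeries_general m k π hπ A hA b hb
end
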